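/- For every chain of subsets [n] = K_1 ⊋ K_2 ⊋ ⋯ ⊋ K_{m+1} = ∅, the set O_{K_1,…,K_{m+1}} is nonempty; hence Y_n is the disjoint union of the sets O_{K_1,…,K_{m+1}} over all such chains, and the assignment sending a T_n-orbit in Y_n to the common chain of its points is a bijection between the set of T_n-orbits in Y_n and the set of chains [n] = K_1 ⊋ K_2 ⊋ ⋯ ⊋ K_{m+1} = ∅. -/

import Mathlib

noncomputable section

open Projectivization

instance projTopology {K V : Type*} [DivisionRing K] [AddCommGroup V] [Module K V]
    [TopologicalSpace V] : TopologicalSpace (Projectivization K V) :=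
  inferInstanceAs (TopologicalSpace (Quotient (projectivizationSetoid K V)))

/-- The index type of nonempty subsets of `ι`. -/
abbrev NES (ι : Type) := {I : Set ι // I.Nonempty}

/-- The ambient product `P = ∏_{∅ ≠ I ⊆ ι} ℙ^I` of projective spaces. -/
abbrev PSp (ι : Type) := (I : NES ι) → Projectivization ℂ (↥I.1 → ℂ)

/-- The subset of `ℙ^ι` consisting of points all of whose homogeneous coordinates
are nonzero (an algebraic torus). -/
def torusSet (ι : Type) : Set (Projectivization ℂ (ι → ℂ)) := {x | ∀ i, x.rep i ≠ 0}

open Classical in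
/-- The `i`-th homogeneous coordinate (for the chosen representative `rep`) of the
`K`-component of a point `p ∈ P`; junk value `0` if `i ∉ K` or `K = ∅`. -/
def pcoord (ι : Type) (p : PSp ι) (K : Set ι) (i : ι) : ℂ :=
  if h : K.Nonempty ∧ i ∈ K then (p ⟨K, h.1⟩).rep ⟨i, h.2⟩ else 0

lemma pcoord_exists_ne (ι : Type) (p : PSp ι) (K : Set ι) (hK : K.Nonempty) :
    ∃ i, i ∈ K ∧ pcoord ι p K i ≠ 0 := by
  obtain ⟨x, hx⟩ := Function.ne_iff.mp (Projectivization.rep_nonzero (p ⟨K, hK⟩))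
  refine ⟨x.1, x.2, ?_⟩
  rw [pcoord, dif_pos ⟨hK, x.2⟩]
  simpa using hx

/-- The map `ρ` from the torus to `P`, whose `I`-component is given by restricting
the homogeneous coordinates. -/
def rho (ι : Type) (x : ↥(torusSet ι)) : PSp ι := fun I =>
  Projectivization.mk ℂ (fun i : ↥I.1 => x.1.rep i.1) <| by
    obtain ⟨i, hi⟩ := I.2
    intro h0
    exact x.2 i (by simpa using congrFun h0 ⟨i, hi⟩)

/-- `Y`, the closure of `ρ(T)` in `P`. -/
def Yn (ι : Type) : Set (PSp ι) := closure (Set.range (rho ι))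

/-- The chain of a point `p ∈ P`: `chainK ι p 0 = univ` (this is `K₁` in the paper)
and `chainK ι p (ℓ+1)` (i.e. `K_{ℓ+2}`) consists of those `k ∈ chainK ι p ℓ` for which the
`k`-th homogeneous coordinate of the `chainK ι p ℓ`-component of `p` vanishes. -/
def chainK (ι : Type) (p : PSp ι) : ℕ → Set ι
  | 0 => Set.univ
  | ℓ + 1 => {k ∈ chainK ι p ℓ | pcoord ι p (chainK ι p ℓ) k = 0}

/-- A chain of subsets `ι = K 0 ⊋ K 1 ⊋ ⋯ ⊋ K m = ∅` (written `K₁ ⊋ ⋯ ⊋ K_{m+1}` in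
the paper); we extend it by `∅` beyond the `m`-th step so that it is determined by
the function `K`. -/
structure SubsetChain (ι : Type) where
  m : ℕ
  K : ℕ → Set ι
  first : K 0 = Set.univ
  strict : ∀ ℓ < m, K (ℓ + 1) ⊂ K ℓ
  last : K m = ∅
  beyond : ∀ ℓ, m ≤ ℓ → K ℓ = ∅

/-- The piece `O_{K₁,…,K_{m+1}}` of `Y`: those points of `Y` whose chain is the given one. -/
def Ochain (ι : Type) (c : SubsetChain ι) : Set (PSp ι) :=
  {p ∈ Yn ι | ∀ ℓ ≤ c.m, chainK ι p ℓ = c.K ℓ}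

/-- The subset `D_{K₁,…,K_{m+1}}` of `Y`: the points whose `K_ℓ`-component has vanishing
coordinates indexed by `K_{ℓ+1}`. -/
def Dchain (ι : Type) (c : SubsetChain ι) : Set (PSp ι) :=
  {p ∈ Yn ι | ∀ ℓ < c.m, ∀ k ∈ c.K (ℓ + 1), pcoord ι p (c.K ℓ) k = 0}

/-- The action of an element of the torus on a point of `P`:
`[a]·([b_i]_{i ∈ I})_I = ([a_i b_i]_{i ∈ I})_I`. -/
def act (ι : Type) (t : ↥(torusSet ι)) (p : PSp ι) : PSp ι := fun I =>
  Projectivization.mk ℂ (fun i : ↥I.1 => t.1.rep i.1 * (p I).rep i) <| by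
    intro h0
    obtain ⟨i, hi⟩ := Function.ne_iff.mp (Projectivization.rep_nonzero (p I))
    have h : t.1.rep i.1 * (p I).rep i = 0 := by simpa using congrFun h0 i
    exact mul_ne_zero (t.2 i.1) (by simpa using hi) h

/-- The action of a permutation `w` of `ι` on `P`: the `w(I)`-component of `w·p` is
`[a^I_{w⁻¹(j)}]_{j ∈ w(I)}`; equivalently the `J`-component of `w·p` is
`[a^{w⁻¹(J)}_{w⁻¹(j)}]_{j ∈ J}`. -/
def permAct (ι : Type) (w : Equiv.Perm ι) (p : PSp ι) : PSp ι := fun J =>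
  Projectivization.mk ℂ (fun j : ↥J.1 => pcoord ι p (⇑(w⁻¹) '' J.1) (w⁻¹ j.1)) <| by
    have hK : ((⇑(w⁻¹) : ι → ι) '' J.1).Nonempty := J.2.image _
    obtain ⟨i, hi, hne⟩ := pcoord_exists_ne ι p _ hK
    obtain ⟨j, hj, hji⟩ := hi
    intro h0
    apply hne
    have h := congrFun h0 ⟨j, hj⟩
    simpa [hji] using h

/-!
Every point of `Y` satisfies the closed relations saying that, for `I ⊆ J`, the `I`-component
is proportional to the restriction of the `J`-component to `I`. Given a chain
`K₀ ⊋ ⋯ ⊋ K_m = ∅`, call `level i` the last `ℓ` with `i ∈ K_ℓ`. For a point `p` with this chain,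
take `J = K_ℓ` with `ℓ` the minimal level on `I`: the restriction of the `J`-component to `I`
is `b_i` on the elements of `I` of minimal level and `0` elsewhere, where `b_i ≠ 0` is the
`i`-th coordinate of the `K_{level i}`-component of `p`. So `p = chainPoint c b`. Conversely,
`chainPoint c b` is the limit of `ρ(ε^{level i} b_i)` as `ε → 0` and has chain `c`. Hence each
piece is `{chainPoint c b | b}`, on which the torus acts by multiplying `b`, transitively.
-/

namespace Projectivization

open scoped LinearAlgebra.Projectivization

section Topology

open Topology

variable {K V : Type*} [DivisionRing K] [AddCommGroup V] [Module K V] [TopologicalSpace V]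

theorem isOpenQuotientMap_mk [ContinuousConstSMul K V] :
    IsOpenQuotientMap (fun v : {v : V // v ≠ 0} => mk K v.1 v.2) where
  surjective x := ⟨⟨x.rep, x.rep_nonzero⟩, x.mk_rep⟩
  continuous := continuous_quotient_mk'
  isOpenMap U hU := by
    let smul (a : Kˣ) (v : {v : V // v ≠ 0}) : {v : V // v ≠ 0} :=
      ⟨a • v.1, (smul_ne_zero_iff_ne a).2 v.2⟩
    have hsat : (fun v : {v : V // v ≠ 0} => mk K v.1 v.2) ⁻¹'
        ((fun v : {v : V // v ≠ 0} => mk K v.1 v.2) '' U) = ⋃ a : Kˣ, smul a ⁻¹' U := by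
      ext v
      simp only [Set.mem_preimage, Set.mem_image, Set.mem_iUnion, mk_eq_mk_iff]
      constructor
      · rintro ⟨u, hu, a, hau⟩
        exact ⟨a, by convert hu; exact Subtype.ext hau⟩
      · rintro ⟨a, ha⟩
        exact ⟨smul a v, ha, a, rfl⟩
    have hq : IsQuotientMap (fun v : {v : V // v ≠ 0} => mk K v.1 v.2) :=
      isQuotientMap_quotient_mk'
    rw [← hq.isOpen_preimage, hsat]
    exact isOpen_iUnion fun a => hU.preimage <|
      ((continuous_const_smul (a : K)).comp continuous_subtype_val).subtype_mk _

theorem isClosed_setOf_rep_mul_eq {K α β : Type*} [Field K] [TopologicalSpace K]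
    [IsTopologicalRing K] [T2Space K] (a a' : α) (b b' : β) :
    IsClosed {xy : ℙ K (α → K) × ℙ K (β → K) |
      xy.1.rep a * xy.2.rep b' = xy.1.rep a' * xy.2.rep b} := by
  have hq := (isOpenQuotientMap_mk (K := K) (V := α → K)).prodMap
    (isOpenQuotientMap_mk (K := K) (V := β → K))
  rw [← hq.isQuotientMap.isClosed_preimage]
  have hcoord {x : α} {y : β} :
      Continuous fun vw : {v : α → K // v ≠ 0} × {w : β → K // w ≠ 0} => vw.1.1 x * vw.2.1 y :=
    ((continuous_apply x).comp (continuous_subtype_val.comp continuous_fst)).mul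
      ((continuous_apply y).comp (continuous_subtype_val.comp continuous_snd))
  convert isClosed_eq (hcoord (x := a) (y := b')) (hcoord (x := a') (y := b)) using 1
  ext ⟨v, w⟩
  obtain ⟨s, hs⟩ := exists_smul_eq_mk_rep K v.1 v.2
  obtain ⟨t, ht⟩ := exists_smul_eq_mk_rep K w.1 w.2
  simp only [Set.mem_preimage, Prod.map_apply, Set.mem_ofPred_eq, ← hs, ← ht, Pi.smul_apply,
    Units.smul_def, smul_eq_mul]
  have hst : (s * t : K) ≠ 0 := mul_ne_zero s.ne_zero t.ne_zero
  exact ⟨fun h => mul_left_cancel₀ hst (by linear_combination h),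
    fun h => by linear_combination (s * t : K) * h⟩

end Topology

theorem eq_mk_of_rep_mul_eq {K α : Type*} [Field K] (x : ℙ K (α → K)) {w : α → K} (hw : w ≠ 0)
    (h : ∀ a a', x.rep a * w a' = x.rep a' * w a) : x = mk K w hw := by
  obtain ⟨a₀, ha₀⟩ := Function.ne_iff.mp hw
  rw [← x.mk_rep, mk_eq_mk_iff']
  refine ⟨x.rep a₀ / w a₀, funext fun a => ?_⟩
  simp only [Pi.smul_apply, smul_eq_mul]
  rw [div_mul_eq_mul_div, div_eq_iff ha₀]
  linear_combination -h a a₀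

end Projectivization

section Compatible

variable {ι : Type}

def compatibleLocus (ι : Type) : Set (PSp ι) :=
  {p | ∀ (I J : NES ι) (hIJ : I.1 ⊆ J.1) (i i' : I.1),
    (p I).rep i * (p J).rep (Set.inclusion hIJ i') = (p I).rep i' * (p J).rep (Set.inclusion hIJ i)}

theorem pcoord_of_mem {p : PSp ι} {K : Set ι} (hK : K.Nonempty) {i : ι} (hi : i ∈ K) :
    pcoord ι p K i = (p ⟨K, hK⟩).rep ⟨i, hi⟩ :=
  dif_pos ⟨hK, hi⟩

theorem isClosed_compatibleLocus : IsClosed (compatibleLocus ι) := by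
  simp only [compatibleLocus, Set.ofPred_forall]
  refine isClosed_iInter fun I => isClosed_iInter fun J => isClosed_iInter fun hIJ =>
    isClosed_iInter fun i => isClosed_iInter fun i' => ?_
  have hcomponents : Continuous fun p : PSp ι => (p I, p J) :=
    (continuous_apply I).prodMk (continuous_apply J)
  exact (isClosed_setOf_rep_mul_eq (K := ℂ) i i' (Set.inclusion hIJ i)
    (Set.inclusion hIJ i')).preimage hcomponents

theorem rho_mem_compatibleLocus (x : torusSet ι) : rho ι x ∈ compatibleLocus ι := by
  intro I J hIJ i i'
  obtain ⟨s, hs⟩ : ∃ s : ℂˣ, s • _ = (rho ι x I).rep := exists_smul_eq_mk_rep ℂ _ _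
  obtain ⟨t, ht⟩ : ∃ t : ℂˣ, t • _ = (rho ι x J).rep := exists_smul_eq_mk_rep ℂ _ _
  simp only [← hs, ← ht, Pi.smul_apply, Units.smul_def, smul_eq_mul, Set.inclusion]
  ring

theorem Yn_subset_compatibleLocus : Yn ι ⊆ compatibleLocus ι :=
  closure_minimal (Set.range_subset_iff.mpr rho_mem_compatibleLocus) isClosed_compatibleLocus

theorem eq_mk_of_mem_compatibleLocus {p : PSp ι} (hp : p ∈ compatibleLocus ι) {I J : NES ι}
    (hIJ : I.1 ⊆ J.1) {w : I.1 → ℂ} (hw : w ≠ 0)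
    (hwJ : ∀ i, w i = (p J).rep (Set.inclusion hIJ i)) : p I = mk ℂ w hw :=
  eq_mk_of_rep_mul_eq _ hw fun i i' => by rw [hwJ, hwJ]; exact hp I J hIJ i i'

end Compatible

namespace SubsetChain

variable {ι : Type} (c : SubsetChain ι)

theorem antitone : Antitone c.K := by
  refine antitone_nat_of_succ_le fun ℓ => ?_
  rcases lt_or_ge ℓ c.m with h | h
  · exact (c.strict ℓ h).1
  · rw [c.beyond ℓ h, c.beyond (ℓ + 1) (by omega)]

theorem nonempty_of_lt {ℓ : ℕ} (h : ℓ < c.m) : (c.K ℓ).Nonempty := by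
  rw [Set.nonempty_iff_ne_empty]
  intro h'
  exact (c.strict ℓ h).2 (by simp [h'])

theorem eq_of_forall_le_eq {c c' : SubsetChain ι} (F : ℕ → Set ι)
    (hc : ∀ ℓ ≤ c.m, F ℓ = c.K ℓ) (hc' : ∀ ℓ ≤ c'.m, F ℓ = c'.K ℓ) : c = c' := by
  have m_le {c c' : SubsetChain ι} (hc : ∀ ℓ ≤ c.m, F ℓ = c.K ℓ)
      (hc' : ∀ ℓ ≤ c'.m, F ℓ = c'.K ℓ) : c.m ≤ c'.m := by
    by_contra! h
    have hne := c.nonempty_of_lt h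
    rw [← hc _ h.le, hc' _ le_rfl, c'.last] at hne
    exact Set.not_nonempty_empty hne
  have hm : c.m = c'.m := le_antisymm (m_le hc hc') (m_le hc' hc)
  have hK : c.K = c'.K := funext fun ℓ => by
    rcases le_or_gt ℓ c.m with h | h
    · rw [← hc ℓ h, hc' ℓ (hm ▸ h)]
    · rw [c.beyond ℓ h.le, c'.beyond ℓ (hm ▸ h.le)]
  obtain ⟨m, K, _⟩ := c
  obtain ⟨m', K', _⟩ := c'
  simp only at hm hK
  subst hm hK
  rfl

open Classical in
def level (i : ι) : ℕ := Nat.findGreatest (fun ℓ => i ∈ c.K ℓ) c.m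

open Classical in
theorem mem_K_iff_le_level {i : ι} {ℓ : ℕ} : i ∈ c.K ℓ ↔ ℓ ≤ c.level i := by
  constructor
  · intro h
    have hℓ : ℓ ≤ c.m := by
      by_contra! hlt
      rw [c.beyond ℓ hlt.le] at h
      exact h
    exact Nat.le_findGreatest hℓ h
  · intro h
    unfold level at h
    refine c.antitone h (Nat.findGreatest_spec (P := fun ℓ => i ∈ c.K ℓ) (m := 0)
      (Nat.zero_le _) ?_)
    simp [c.first]

theorem level_lt_m (i : ι) : c.level i < c.m := by
  by_contra! h
  have hi := c.mem_K_iff_le_level.mpr h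
  rw [c.last] at hi
  exact hi

def levelOf (I : Set ι) : ℕ := sInf (c.level '' I)

theorem levelOf_le {I : Set ι} {i : ι} (hi : i ∈ I) : c.levelOf I ≤ c.level i :=
  Nat.sInf_le ⟨i, hi, rfl⟩

theorem exists_level_eq_levelOf {I : Set ι} (hI : I.Nonempty) :
    ∃ i ∈ I, c.level i = c.levelOf I :=
  Nat.sInf_mem (hI.image c.level)

theorem subset_K_levelOf (I : Set ι) : I ⊆ c.K (c.levelOf I) :=
  fun _ hi => c.mem_K_iff_le_level.mpr (c.levelOf_le hi)

theorem levelOf_K {ℓ : ℕ} (h : ℓ < c.m) : c.levelOf (c.K ℓ) = ℓ := by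
  obtain ⟨i, hi, hi'⟩ := Set.sdiff_nonempty.mpr (c.strict ℓ h).2
  obtain ⟨j, hj, hj'⟩ := c.exists_level_eq_levelOf (c.nonempty_of_lt h)
  have h₁ := c.levelOf_le hi
  have h₂ := c.mem_K_iff_le_level.mp hi
  have h₃ := c.mem_K_iff_le_level.mp hj
  rw [c.mem_K_iff_le_level] at hi'
  omega

end SubsetChain

section ChainOfPoint

variable {ι : Type} (p : PSp ι)

theorem chainK_succ_ssubset {ℓ : ℕ} (h : (chainK ι p ℓ).Nonempty) :
    chainK ι p (ℓ + 1) ⊂ chainK ι p ℓ := by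
  obtain ⟨i, hi, hne⟩ := pcoord_exists_ne ι p _ h
  exact ⟨fun _ hk => hk.1, fun hsub => hne (hsub hi).2⟩

theorem chainK_antitone : Antitone (chainK ι p) :=
  antitone_nat_of_succ_le fun _ _ hk => hk.1

theorem exists_chainK_eq_empty [Finite ι] : ∃ ℓ, chainK ι p ℓ = ∅ := by
  by_contra! h
  have : StrictAnti (chainK ι p) := strictAnti_nat_of_succ_lt fun ℓ =>
    chainK_succ_ssubset p (h ℓ)
  exact not_injective_infinite_finite _ this.injective

open Classical in
def chainOf [Finite ι] : SubsetChain ι where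
  m := Nat.find (exists_chainK_eq_empty p)
  K := chainK ι p
  first := rfl
  strict _ hℓ := chainK_succ_ssubset p
    (Set.nonempty_iff_ne_empty.mpr (Nat.find_min (exists_chainK_eq_empty p) hℓ))
  last := Nat.find_spec (exists_chainK_eq_empty p)
  beyond _ hℓ := Set.subset_empty_iff.mp
    (Nat.find_spec (exists_chainK_eq_empty p) ▸ chainK_antitone p hℓ)

theorem mem_Ochain_chainOf [Finite ι] (hp : p ∈ Yn ι) : p ∈ Ochain ι (chainOf p) :=
  ⟨hp, fun _ _ => rfl⟩

end ChainOfPoint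

section ChainPoint

variable {ι : Type} (c : SubsetChain ι) (b : ι → ℂˣ)

def chainVec (I : Set ι) : I → ℂ :=
  fun i => if c.level i = c.levelOf I then (b i : ℂ) else 0

theorem chainVec_ne_zero {I : Set ι} (hI : I.Nonempty) : chainVec c b I ≠ 0 := by
  obtain ⟨i, hi, hlevel⟩ := c.exists_level_eq_levelOf hI
  intro h
  have := congrFun h ⟨i, hi⟩
  simp [chainVec, hlevel] at this

def chainPoint : PSp ι := fun I => mk ℂ (chainVec c b I.1) (chainVec_ne_zero c b I.2)

theorem pcoord_chainPoint_eq_zero_iff {K : Set ι} {i : ι} (hi : i ∈ K) :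
    pcoord ι (chainPoint c b) K i = 0 ↔ c.level i ≠ c.levelOf K := by
  have hK : K.Nonempty := ⟨i, hi⟩
  obtain ⟨s, hs⟩ : ∃ s : ℂˣ, s • _ = (chainPoint c b ⟨K, hK⟩).rep := exists_smul_eq_mk_rep ℂ _ _
  rw [pcoord_of_mem hK hi, ← hs]
  by_cases hlevel : c.level i = c.levelOf K <;> simp [chainVec, hlevel, Units.smul_def]

theorem chainK_chainPoint {ℓ : ℕ} (hℓ : ℓ ≤ c.m) : chainK ι (chainPoint c b) ℓ = c.K ℓ := by
  induction ℓ with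
  | zero => exact c.first.symm
  | succ ℓ ih =>
    have hlt : ℓ < c.m := by omega
    ext k
    simp only [chainK, ih hlt.le, Set.mem_ofPred_eq]
    constructor
    · rintro ⟨hk, hzero⟩
      rw [pcoord_chainPoint_eq_zero_iff c b hk, c.levelOf_K hlt] at hzero
      have := c.mem_K_iff_le_level.mp hk
      exact c.mem_K_iff_le_level.mpr (by omega)
    · intro hk
      have hk' := c.mem_K_iff_le_level.mp hk
      refine ⟨c.mem_K_iff_le_level.mpr (by omega), ?_⟩
      rw [pcoord_chainPoint_eq_zero_iff c b (c.mem_K_iff_le_level.mpr (by omega)), c.levelOf_K hlt]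
      omega

theorem pcoord_K_eq_zero_iff {p : PSp ι} (hchain : ∀ ℓ ≤ c.m, chainK ι p ℓ = c.K ℓ) {i : ι}
    {ℓ : ℕ} (hℓ : ℓ < c.m) (hi : i ∈ c.K ℓ) : pcoord ι p (c.K ℓ) i = 0 ↔ ℓ < c.level i := by
  have h := Set.ext_iff.mp (hchain (ℓ + 1) hℓ) i
  simp only [chainK, hchain ℓ hℓ.le, Set.mem_ofPred_eq, hi, true_and] at h
  rw [h, c.mem_K_iff_le_level]
  rfl

theorem exists_eq_chainPoint {p : PSp ι} (hp : p ∈ Ochain ι c) :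
    ∃ b : ι → ℂˣ, p = chainPoint c b := by
  obtain ⟨hY, hchain⟩ := hp
  have hb (i : ι) : pcoord ι p (c.K (c.level i)) i ≠ 0 := by
    rw [ne_eq, pcoord_K_eq_zero_iff c hchain (c.level_lt_m i) (c.mem_K_iff_le_level.mpr le_rfl)]
    exact lt_irrefl _
  refine ⟨fun i => Units.mk0 _ (hb i), funext fun I => ?_⟩
  have hJ : (c.K (c.levelOf I.1)).Nonempty := I.2.mono (c.subset_K_levelOf I.1)
  refine eq_mk_of_mem_compatibleLocus (Yn_subset_compatibleLocus hY) (J := ⟨_, hJ⟩)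
    (c.subset_K_levelOf I.1) _ fun i => ?_
  have hI : c.levelOf I.1 < c.m := (c.levelOf_le i.2).trans_lt (c.level_lt_m i)
  have hrep : (p ⟨_, hJ⟩).rep (Set.inclusion (c.subset_K_levelOf I.1) i) =
      pcoord ι p (c.K (c.levelOf I.1)) i :=
    (pcoord_of_mem hJ _).symm
  rw [hrep]
  simp only [chainVec, Units.val_mk0]
  split_ifs with hlevel
  · rw [hlevel]
  · rw [eq_comm, pcoord_K_eq_zero_iff c hchain hI (c.subset_K_levelOf _ i.2)]
    exact (c.levelOf_le i.2).lt_of_ne (Ne.symm hlevel)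

end ChainPoint

section Torus

variable {ι : Type}

theorem coe_units_ne_zero {α : Type*} [Nonempty α] (u : α → ℂˣ) : (fun i => (u i : ℂ)) ≠ 0 :=
  fun h => (u (Classical.arbitrary α)).ne_zero (congrFun h _)

variable [Nonempty ι]

def torusOf (u : ι → ℂˣ) : torusSet ι :=
  ⟨mk ℂ (fun i => (u i : ℂ)) (coe_units_ne_zero u), fun i => by
    obtain ⟨s, hs⟩ := exists_smul_eq_mk_rep ℂ _ (coe_units_ne_zero u)
    simp [← hs, Units.smul_def]⟩

theorem exists_smul_eq_rep_torusOf (u : ι → ℂˣ) :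
    ∃ s : ℂˣ, s • (fun i => (u i : ℂ)) = (torusOf u).1.rep :=
  exists_smul_eq_mk_rep ℂ _ _

def torusUnits (t : torusSet ι) : ι → ℂˣ := fun i => Units.mk0 (t.1.rep i) (t.2 i)

theorem torusOf_torusUnits (t : torusSet ι) : torusOf (torusUnits t) = t :=
  Subtype.ext t.1.mk_rep

end Torus

section Orbits

open Filter Topology

variable {ι : Type} [Nonempty ι] (c : SubsetChain ι) (b : ι → ℂˣ)

theorem act_torusOf_chainPoint (u : ι → ℂˣ) :
    act ι (torusOf u) (chainPoint c b) = chainPoint c (u * b) := by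
  funext I
  obtain ⟨s, hs⟩ := exists_smul_eq_rep_torusOf u
  obtain ⟨r, hr⟩ : ∃ r : ℂˣ, r • _ = (chainPoint c b I).rep := exists_smul_eq_mk_rep ℂ _ _
  refine (mk_eq_mk_iff ℂ _ _ _ _).mpr ⟨s * r, funext fun i => ?_⟩
  simp only [← hs, ← hr, chainVec, Pi.smul_apply, Units.smul_def, smul_eq_mul, Pi.mul_apply,
    Units.val_mul]
  split_ifs <;> ring

theorem tendsto_rho_torusOf_chainPoint {ε : ℕ → ℂˣ}
    (hε : Tendsto (fun k => (ε k : ℂ)) atTop (𝓝 0)) :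
    Tendsto (fun k => rho ι (torusOf fun i => ε k ^ c.level i * b i)) atTop
      (𝓝 (chainPoint c b)) := by
  refine tendsto_pi_nhds.mpr fun I => ?_
  have := I.2.to_subtype
  let w (k : ℕ) (i : I.1) : ℂˣ := ε k ^ (c.level i - c.levelOf I.1) * b i
  have hcomponent (k : ℕ) : rho ι (torusOf fun i => ε k ^ c.level i * b i) I =
      mk ℂ (fun i => (w k i : ℂ)) (coe_units_ne_zero _) := by
    obtain ⟨s, hs⟩ := exists_smul_eq_rep_torusOf fun i => ε k ^ c.level i * b i
    refine (mk_eq_mk_iff ℂ _ _ _ _).mpr ⟨s * ε k ^ c.levelOf I.1, funext fun i => ?_⟩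
    simp only [← hs, w, Pi.smul_apply, Units.smul_def, smul_eq_mul, Units.val_mul,
      Units.val_pow_eq_pow_val]
    rw [← Nat.add_sub_cancel' (c.levelOf_le i.2), pow_add, Nat.add_sub_cancel_left]
    ring
  have hw : Tendsto (fun k i => (w k i : ℂ)) atTop (𝓝 (chainVec c b I.1)) := by
    refine tendsto_pi_nhds.mpr fun i => ?_
    simp only [chainVec, w, Units.val_mul, Units.val_pow_eq_pow_val]
    split_ifs with hlevel
    · simp [hlevel]
    · have hpos : c.level i - c.levelOf I.1 ≠ 0 := by
        have := c.levelOf_le i.2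
        omega
      simpa [zero_pow hpos] using (hε.pow (c.level i - c.levelOf I.1)).mul_const (b i : ℂ)
  simp only [hcomponent]
  exact ((isOpenQuotientMap_mk (K := ℂ)).continuous.tendsto
    ⟨chainVec c b I.1, chainVec_ne_zero c b I.2⟩).comp
    ((tendsto_subtype_rng (f := fun k => (⟨_, coe_units_ne_zero (w k)⟩ :
      {v : I.1 → ℂ // v ≠ 0}))).mpr hw)

theorem chainPoint_mem_Yn : chainPoint c b ∈ Yn ι := by
  let ε (k : ℕ) : ℂˣ :=
    Units.mk0 (1 / ((k : ℂ) + 1)) (one_div_ne_zero (Nat.cast_add_one_ne_zero k))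
  exact mem_closure_of_tendsto
    (tendsto_rho_torusOf_chainPoint c b (ε := ε) tendsto_one_div_add_atTop_nhds_zero_nat)
    (.of_forall fun _ => ⟨_, rfl⟩)

theorem Ochain_eq_range_chainPoint : Ochain ι c = Set.range (chainPoint c) := by
  ext p
  refine ⟨fun hp => (exists_eq_chainPoint c hp).imp fun _ h => h.symm, ?_⟩
  rintro ⟨b, rfl⟩
  exact ⟨chainPoint_mem_Yn c b, fun _ => chainK_chainPoint c b⟩

theorem orbit_chainPoint :
    {q | ∃ t : torusSet ι, act ι t (chainPoint c b) = q} = Set.range (chainPoint c) := by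
  ext q
  constructor
  · rintro ⟨t, rfl⟩
    rw [← torusOf_torusUnits t, act_torusOf_chainPoint]
    exact ⟨_, rfl⟩
  · rintro ⟨b', rfl⟩
    exact ⟨torusOf (b' / b), by rw [act_torusOf_chainPoint, div_mul_cancel]⟩

end Orbits

/-- Each piece `O_{K₁,…,K_{m+1}}` is nonempty; `Y_n` is the disjoint union of the pieces
`O_{K₁,…,K_{m+1}}` over all chains `[n] = K₁ ⊋ ⋯ ⊋ K_{m+1} = ∅`; and sending a torus
orbit in `Y_n` to the common chain of its points gives a bijection between orbits and
chains (the orbit of any point of a piece is that piece, distinct chains give disjoint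
pieces, and every chain occurs). -/
theorem stmt3 (n : ℕ) (hn : 1 ≤ n) :
    (∀ c : SubsetChain (Fin n), (Ochain (Fin n) c).Nonempty) ∧
    (Yn (Fin n) = ⋃ c : SubsetChain (Fin n), Ochain (Fin n) c) ∧
    (∀ c c' : SubsetChain (Fin n),
      (Ochain (Fin n) c ∩ Ochain (Fin n) c').Nonempty → c = c') ∧
    (∀ c : SubsetChain (Fin n), ∀ p ∈ Ochain (Fin n) c,
      {q | ∃ t : ↥(torusSet (Fin n)), act (Fin n) t p = q} = Ochain (Fin n) c) := by
  have : Nonempty (Fin n) := ⟨⟨0, hn⟩⟩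
  refine ⟨fun c => ?_, ?_, ?_, fun c p hp => ?_⟩
  · rw [Ochain_eq_range_chainPoint]
    exact Set.range_nonempty _
  · exact Set.Subset.antisymm
      (fun p hp => Set.mem_iUnion.mpr ⟨chainOf p, mem_Ochain_chainOf p hp⟩)
      (Set.iUnion_subset fun c => Set.sep_subset _ _)
  · rintro c c' ⟨p, hc, hc'⟩
    exact SubsetChain.eq_of_forall_le_eq (chainK _ p) hc.2 hc'.2
  · obtain ⟨b, rfl⟩ := exists_eq_chainPoint c hp
    rw [orbit_chainPoint, Ochain_eq_range_chainPoint]
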